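/- Let T be a finite plane tree with n vertices. Set j(k) = 2k + S_T(k) for 0 ≤ k ≤ n. Then j is strictly increasing with j(0) = 0 and j(n) = 2n−1, and for all 0 ≤ k ≤ n−1 the Łukasiewicz walk S_{corot T} satisfies on the integer interval [j(k), j(k+1)]: if j(k+1) = j(k)+1, then S_{corot T}(j(k)) = S_T(k) and S_{corot T}(j(k+1)) = S_T(k+1); otherwise, S_{corot T} is affine on the integer interval [j(k), j(k+1)−1] with S_{corot T}(j(k)) = S_T(k) and S_{corot T}(j(k+1)−1) = S_T(k+1)+1, and then S_{corot T}(j(k+1)) = S_T(k+1). -/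

import Mathlib

inductive PTree : Type
  | node : List PTree → PTree

namespace PTree

instance : Inhabited PTree := ⟨node []⟩

mutual
def size : PTree → ℕ
  | node ts => 1 + sizeList ts
def sizeList : List PTree → ℕ
  | [] => 0
  | t :: ts => size t + sizeList ts
end

def deg : PTree → ℕ
  | node ts => ts.length

mutual
def degreesAux : PTree → List ℕ
  | node ts => ts.length :: degreesListAux ts
def degreesListAux : List PTree → List ℕ
  | [] => []
  | t :: ts => degreesAux t ++ degreesListAux ts
end

mutual
def heightsAux : PTree → ℕ → List ℕ
  | node ts, d => d :: heightsListAux ts (d + 1)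
def heightsListAux : List PTree → ℕ → List ℕ
  | [], _ => []
  | t :: ts, d => heightsAux t d ++ heightsListAux ts d
end

mutual
def contourAux : PTree → ℕ → List ℕ
  | node ts, d => d :: contourListAux ts (d + 1)
def contourListAux : List PTree → ℕ → List ℕ
  | [], _ => []
  | t :: ts, d => contourAux t d ++ (d - 1) :: contourListAux ts d
end

mutual
def verticesAux : PTree → List ℕ → List (List ℕ)
  | node ts, p => p :: verticesListAux ts p 0
def verticesListAux : List PTree → List ℕ → ℕ → List (List ℕ)
  | [], _, _ => []
  | t :: ts, p, i => verticesAux t (p ++ [i]) ++ verticesListAux ts p (i + 1)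
end

def vertices (T : PTree) : List (List ℕ) := verticesAux T []

/-- Height process of a plane tree. -/
def H (T : PTree) (k : ℕ) : ℕ := (heightsAux T 0).getD k 0

/-- Contour process of a plane tree. -/
def C (T : PTree) (k : ℕ) : ℕ := (contourAux T 0).getD k 0

/-- Łukasiewicz walk of a plane tree. -/
def S (T : PTree) (k : ℕ) : ℤ :=
  (((degreesAux T).take k).map (fun d => (d : ℤ) - 1)).sum

def subtreeAt : List ℕ → PTree → Option PTree
  | [], t => some t
  | i :: p, node ts => (ts[i]?).bind (subtreeAt p)

def isInternal (T : PTree) (p : List ℕ) : Bool :=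
  match subtreeAt p T with
  | some (node (_ :: _)) => true
  | _ => false

def isVertex (T : PTree) (p : List ℕ) : Bool := (subtreeAt p T).isSome

def rot : PTree → PTree
  | node [] => node []
  | node (t :: ts) => node [rot t, rot (node ts)]

mutual
def corot : PTree → PTree
  | node ts => corotAux ts (node [])
def corotAux : List PTree → PTree → PTree
  | [], acc => acc
  | t :: ts, acc => corotAux ts (node [acc, corot t])
end

mutual
def mirror : PTree → PTree
  | node ts => node (mirrorList ts)
def mirrorList : List PTree → List PTree
  | [] => []
  | t :: ts => mirrorList ts ++ [mirror t]
end

mutual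
def internalTree : PTree → PTree
  | node ts => node (internalList ts)
def internalList : List PTree → List PTree
  | [] => []
  | node [] :: ts => internalList ts
  | t :: ts => internalTree t :: internalList ts
end

def mirrorPath : PTree → List ℕ → List ℕ
  | _, [] => []
  | node ts, i :: p =>
      (ts.length - 1 - i) ::
        (match ts[i]? with
         | some t => mirrorPath t p
         | none => p)

def lexLt : List ℕ → List ℕ → Bool
  | _, [] => false
  | [], _ :: _ => true
  | a :: as, b :: bs => if a < b then true else if a = b then lexLt as bs else false

def nonRootVertices (T : PTree) : List (List ℕ) := (vertices T).tail

def internalVertices (T : PTree) : List (List ℕ) :=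
  (vertices T).filter (fun p => isInternal T p)

/-- the order-preserving identification between non-root vertices of `T` and
internal vertices of `rot T`. -/
def iota (T : PTree) (u : List ℕ) : List ℕ :=
  (internalVertices (rot T)).getD ((nonRootVertices T).idxOf u) []

/-- `L(u)`: number of edges grafted on the left of the ancestral line of `u`. -/
def Lnum (T : PTree) (u : List ℕ) : ℕ :=
  ((vertices T).filter (fun w =>
      !w.isEmpty && (w.dropLast.isPrefixOf u && w.dropLast != u)
        && !(w.isPrefixOf u && w != u) && lexLt w u)).length

/-- mirrored enumeration of `T`. -/
def mirroredEnum (T : PTree) (k : ℕ) : List ℕ :=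
  mirrorPath (mirror T) ((vertices (mirror T)).getD k [])

def descendR (T : PTree) : ℕ → List ℕ → List ℕ
  | 0, p => p
  | fuel + 1, p => if isInternal T (p ++ [1]) then descendR T fuel (p ++ [1]) else p

def ascend (visited : List (List ℕ)) : ℕ → List ℕ → List ℕ
  | 0, p => p.dropLast
  | fuel + 1, p => if p.dropLast ∈ visited then ascend visited fuel p.dropLast else p.dropLast

def rightmostSeq (T : PTree) : ℕ → List (List ℕ)
  | 0 => []
  | k + 1 =>
      let prev := rightmostSeq T k
      let next :=
        match prev.getLast? with
        | none => descendR T (size T) []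
        | some p =>
            if isInternal T (p ++ [0]) then descendR T (size T) (p ++ [0])
            else ascend prev (size T) p
      prev ++ [next]

def Hstar (T : PTree) (k : ℕ) : ℤ :=
  if k = 0 ∨ size T ≤ k then 0 else ((iota T (mirroredEnum T k)).length : ℤ)

end PTree

open PTree

/-- A `ℤ`-valued process is affine on an integer interval if its successive
increments there are constant. -/
def AffineOn (f : ℕ → ℤ) (a b : ℕ) : Prop :=
  ∀ m : ℕ, a ≤ m → m + 2 ≤ b → f (m + 2) - f (m + 1) = f (m + 1) - f m

/-!
Reading `corot T` in lexicographic order, each vertex of `T` of degree `d` turns into `d`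
binary spine vertices followed by a leaf, so the degree sequence of `corot T` is that of `T`
with every `d` replaced by the block `2, …, 2, 0` of length `d + 1`. Along a block,
`S (corot T)` makes `d` up-steps and one down-step, for a net change `d - 1` equal to the
single step of `S T`. The `k`-th block therefore starts at time `∑_{i<k} (dᵢ + 1) = 2k + S T k`,
where the two walks agree, and in between `S (corot T)` climbs with slope one.
-/

namespace PTree

def lukWalk (ds : List ℕ) (k : ℕ) : ℤ := ((ds.take k).map fun d : ℕ => (d : ℤ) - 1).sum

theorem S_eq_lukWalk (T : PTree) : S T = lukWalk (degreesAux T) := by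
  -- not `rfl`: in `S` the binder of the lambda is elaborated in `ℤ` and the list is coerced
  funext k
  rw [S, lukWalk]
  congr 1
  induction (degreesAux T).take k with
  | nil => rfl
  | cons d l ih => simpa using ih

@[simp]
theorem lukWalk_zero (ds : List ℕ) : lukWalk ds 0 = 0 := by simp [lukWalk]

theorem lukWalk_succ {ds : List ℕ} {k : ℕ} (hk : k < ds.length) :
    lukWalk ds (k + 1) = lukWalk ds k + ds[k] - 1 := by
  rw [lukWalk, lukWalk, List.take_add_one, List.getElem?_eq_getElem hk, List.map_append,
    List.sum_append]
  simp only [Option.toList_some, List.map_cons, List.map_nil, List.sum_cons, List.sum_nil]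
  ring

theorem lukWalk_length (ds : List ℕ) : lukWalk ds ds.length = (ds.sum : ℤ) - ds.length := by
  induction ds with
  | nil => simp [lukWalk]
  | cons d ds ih => simp_all [lukWalk]; ring

theorem lukWalk_append_length_add (l₁ l₂ : List ℕ) (i : ℕ) :
    lukWalk (l₁ ++ l₂) (l₁.length + i) = lukWalk l₁ l₁.length + lukWalk l₂ i := by
  simp [lukWalk, List.take_length_add_append]

theorem lukWalk_append_of_le_length {l₁ : List ℕ} (l₂ : List ℕ) {i : ℕ} (hi : i ≤ l₁.length) :
    lukWalk (l₁ ++ l₂) i = lukWalk l₁ i := by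
  simp [lukWalk, List.take_append_of_le_length hi]

theorem lukWalk_take_length (ds : List ℕ) (k : ℕ) :
    lukWalk (ds.take k) (ds.take k).length = lukWalk ds k := by
  rw [lukWalk, List.take_length, lukWalk]

def corotBlock (d : ℕ) : List ℕ := List.replicate d 2 ++ [0]

theorem length_corotBlock (d : ℕ) : (corotBlock d).length = d + 1 := by simp [corotBlock]

theorem sum_corotBlock (d : ℕ) : (corotBlock d).sum = 2 * d := by simp [corotBlock, mul_comm]

theorem lukWalk_corotBlock {d i : ℕ} (hi : i ≤ d) : lukWalk (corotBlock d) i = i := by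
  rw [corotBlock, lukWalk_append_of_le_length _ (by simpa using hi), lukWalk,
    List.take_replicate, min_eq_left hi, List.map_replicate]
  simp

theorem lukWalk_flatMap_corotBlock_length (ds : List ℕ) :
    lukWalk (ds.flatMap corotBlock) (ds.flatMap corotBlock).length = lukWalk ds ds.length := by
  simp only [lukWalk_length]
  induction ds with
  | nil => rfl
  | cons d ds ih =>
    simp only [List.flatMap_cons, List.sum_append, List.length_append, sum_corotBlock,
      length_corotBlock, List.sum_cons, List.length_cons] at ih ⊢
    push_cast at ih ⊢
    linarith

def blockStart (ds : List ℕ) (k : ℕ) : ℕ := ((ds.take k).flatMap corotBlock).length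

theorem blockStart_succ {ds : List ℕ} {k : ℕ} (hk : k < ds.length) :
    blockStart ds (k + 1) = blockStart ds k + ds[k] + 1 := by
  rw [blockStart, blockStart, List.take_add_one, List.getElem?_eq_getElem hk, List.flatMap_append,
    List.length_append, Option.toList_some, List.flatMap_singleton, length_corotBlock, add_assoc]

theorem blockStart_eq {ds : List ℕ} {k : ℕ} (hk : k ≤ ds.length) :
    (blockStart ds k : ℤ) = 2 * k + lukWalk ds k := by
  induction k with
  | zero => simp [blockStart]
  | succ k ih =>
    rw [blockStart_succ hk, lukWalk_succ hk]
    push_cast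
    linarith [ih (by omega)]

theorem blockStart_strictMonoOn (ds : List ℕ) :
    StrictMonoOn (blockStart ds) (Set.Iic ds.length) :=
  strictMonoOn_Iic_of_lt_succ fun k hk => by
    rw [Order.succ_eq_add_one, blockStart_succ hk]
    omega

theorem flatMap_corotBlock_eq (ds : List ℕ) (k : ℕ) :
    ds.flatMap corotBlock = (ds.take k).flatMap corotBlock ++ (ds.drop k).flatMap corotBlock := by
  rw [← List.flatMap_append, List.take_append_drop]

theorem lukWalk_flatMap_corotBlock_blockStart (ds : List ℕ) (k : ℕ) :
    lukWalk (ds.flatMap corotBlock) (blockStart ds k) = lukWalk ds k := by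
  rw [flatMap_corotBlock_eq ds k, blockStart, ← add_zero (List.length _),
    lukWalk_append_length_add, lukWalk_zero, add_zero, lukWalk_flatMap_corotBlock_length,
    lukWalk_take_length]

theorem lukWalk_flatMap_corotBlock_blockStart_add {ds : List ℕ} {k i : ℕ} (hk : k < ds.length)
    (hi : i ≤ ds[k]) :
    lukWalk (ds.flatMap corotBlock) (blockStart ds k + i) = lukWalk ds k + i := by
  rw [flatMap_corotBlock_eq ds k, List.drop_eq_getElem_cons hk, List.flatMap_cons, blockStart,
    lukWalk_append_length_add, lukWalk_flatMap_corotBlock_length,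
    lukWalk_append_of_le_length _ (by rw [length_corotBlock]; omega), lukWalk_corotBlock hi,
    lukWalk_take_length]

theorem affineOn_lukWalk_flatMap_corotBlock {ds : List ℕ} {k : ℕ} (hk : k < ds.length) :
    AffineOn (lukWalk (ds.flatMap corotBlock)) (blockStart ds k) (blockStart ds k + ds[k]) := by
  intro m hkm hm
  obtain ⟨i, rfl⟩ := Nat.exists_eq_add_of_le hkm
  simp only [add_assoc, lukWalk_flatMap_corotBlock_blockStart_add hk (by omega : i ≤ ds[k]),
    lukWalk_flatMap_corotBlock_blockStart_add hk (by omega : i + 1 ≤ ds[k]),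
    lukWalk_flatMap_corotBlock_blockStart_add hk (by omega : i + 2 ≤ ds[k])]
  push_cast
  ring

mutual
theorem length_degreesAux : ∀ T : PTree, (degreesAux T).length = size T
  | node ts => by
    rw [degreesAux, size, List.length_cons, length_degreesListAux, add_comm]
theorem length_degreesListAux : ∀ ts : List PTree, (degreesListAux ts).length = sizeList ts
  | [] => rfl
  | t :: ts => by
    rw [degreesListAux, sizeList, List.length_append, length_degreesAux, length_degreesListAux]
end

mutual
theorem sum_degreesAux : ∀ T : PTree, (degreesAux T).sum + 1 = size T
  | node ts => by
    rw [degreesAux, size, List.sum_cons, ← sum_degreesListAux ts]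
    omega
theorem sum_degreesListAux : ∀ ts : List PTree, (degreesListAux ts).sum + ts.length = sizeList ts
  | [] => rfl
  | t :: ts => by
    rw [degreesListAux, sizeList, List.sum_append, List.length_cons, ← sum_degreesAux,
      ← sum_degreesListAux ts]
    omega
end

theorem S_size (T : PTree) : S T (size T) = -1 := by
  have hsum := sum_degreesAux T
  rw [S_eq_lukWalk, ← length_degreesAux, lukWalk_length, length_degreesAux]
  omega

theorem one_le_size : ∀ T : PTree, 1 ≤ size T
  | node _ => by rw [size]; omega

theorem degreesListAux_eq_flatMap (ts : List PTree) :
    degreesListAux ts = ts.flatMap degreesAux := by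
  induction ts with
  | nil => rfl
  | cons t ts ih => rw [degreesListAux, ih, List.flatMap_cons]

mutual
theorem degreesAux_corot : ∀ T : PTree, degreesAux (corot T) = (degreesAux T).flatMap corotBlock
  | node ts => by
    rw [corot, degreesAux_corotAux ts (node [])]
    simp [degreesAux, degreesListAux, corotBlock, degreesListAux_eq_flatMap, List.flatMap_assoc]
theorem degreesAux_corotAux : ∀ (ts : List PTree) (acc : PTree),
    degreesAux (corotAux ts acc) =
      List.replicate ts.length 2 ++ degreesAux acc ++
        ts.flatMap fun t => (degreesAux t).flatMap corotBlock
  | [], acc => by simp [corotAux]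
  | t :: ts, acc => by
    rw [corotAux, degreesAux_corotAux ts (node [acc, corot t])]
    simp [degreesAux, degreesListAux, degreesAux_corot t, List.replicate_succ']
end

end PTree

theorem stmt17 (T : PTree) :
    (∀ k l : ℕ, k < l → l ≤ size T →
      (2 * (k : ℤ) + S T k).toNat < (2 * (l : ℤ) + S T l).toNat) ∧
    (2 * (0 : ℤ) + S T 0).toNat = 0 ∧
    (2 * (size T : ℤ) + S T (size T)).toNat = 2 * size T - 1 ∧
    (∀ k < size T,
      ((2 * ((k : ℤ) + 1) + S T (k + 1)).toNat = (2 * (k : ℤ) + S T k).toNat + 1 →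
        S (corot T) ((2 * (k : ℤ) + S T k).toNat) = S T k ∧
        S (corot T) ((2 * ((k : ℤ) + 1) + S T (k + 1)).toNat) = S T (k + 1)) ∧
      ((2 * ((k : ℤ) + 1) + S T (k + 1)).toNat ≠ (2 * (k : ℤ) + S T k).toNat + 1 →
        AffineOn (S (corot T)) ((2 * (k : ℤ) + S T k).toNat)
          ((2 * ((k : ℤ) + 1) + S T (k + 1)).toNat - 1) ∧
        S (corot T) ((2 * (k : ℤ) + S T k).toNat) = S T k ∧
        S (corot T) ((2 * ((k : ℤ) + 1) + S T (k + 1)).toNat - 1) = S T (k + 1) + 1 ∧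
        S (corot T) ((2 * ((k : ℤ) + 1) + S T (k + 1)).toNat) = S T (k + 1))) := by
  set ds := degreesAux T
  have hlen : ds.length = size T := length_degreesAux T
  have hj (k : ℕ) (hk : k ≤ size T) : (2 * (k : ℤ) + S T k).toNat = blockStart ds k := by
    rw [S_eq_lukWalk, ← blockStart_eq (hlen ▸ hk), Int.toNat_natCast]
  have hj_succ (k : ℕ) (hk : k < size T) :
      (2 * ((k : ℤ) + 1) + S T (k + 1)).toNat = blockStart ds (k + 1) := by
    rw [← hj (k + 1) hk]; push_cast; rfl
  have hcorot : S (corot T) = lukWalk (ds.flatMap corotBlock) := by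
    rw [S_eq_lukWalk, degreesAux_corot]
  refine ⟨fun k l hkl hl => ?_, by simp [S], ?_, fun k hk => ?_⟩
  · rw [hj k (by omega), hj l hl]
    exact blockStart_strictMonoOn ds (by simp; omega) (by simp; omega) hkl
  · have := S_size T
    have := one_le_size T
    omega
  · have hk' : k < ds.length := hlen ▸ hk
    have hstart : S (corot T) (blockStart ds k) = S T k := by
      rw [hcorot, lukWalk_flatMap_corotBlock_blockStart, S_eq_lukWalk]
    have hend : S (corot T) (blockStart ds (k + 1)) = S T (k + 1) := by
      rw [hcorot, lukWalk_flatMap_corotBlock_blockStart, S_eq_lukWalk]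
    have hlast : S (corot T) (blockStart ds (k + 1) - 1) = S T (k + 1) + 1 := by
      rw [blockStart_succ hk', Nat.add_sub_cancel, hcorot,
        lukWalk_flatMap_corotBlock_blockStart_add hk' le_rfl, S_eq_lukWalk, lukWalk_succ hk']
      ring
    have haffine : AffineOn (S (corot T)) (blockStart ds k) (blockStart ds (k + 1) - 1) := by
      rw [blockStart_succ hk', Nat.add_sub_cancel, hcorot]
      exact affineOn_lukWalk_flatMap_corotBlock hk'
    rw [hj k hk.le, hj_succ k hk]
    exact ⟨fun _ => ⟨hstart, hend⟩, fun _ => ⟨haffine, hstart, hlast, hend⟩⟩
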